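/- arXiv:2509.05900 — 2 statements merged into one kernel-verified Lean document; each statement's English description precedes it below -/
import Mathlib

section
/- Let C be a symmetric monoidal closed category and T a commutative monoid object in C. Let Φ : T ⊗ Ω → Ω be a left action and Φ♭ : Ω → [T, Ω] its flat adjoint. Then Φ♭ equalizes the two morphisms σ♭ and U_Φ♭ from [T, Ω] to [T, [T, Ω]], where σ is the shift action and U_Φ is the transfer action on [T, Ω]: that is, σ♭ ∘ Φ♭ = U_Φ♭ ∘ Φ♭. -/
open CategoryTheory MonoidalCategory MonoidalClosed Limits

universe v u

variable {C : Type u} [Category.{v} C] [MonoidalCategory C] [SymmetricCategory C]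
  [MonoidalClosed C]

/-- A left action of a monoid object `T` on an object: unit and associativity laws. -/
def IsLeftAction (T : Mon C) {X : C} (F : T.X ⊗ X ⟶ X) : Prop :=
  ((MonObj.one (X := T.X)) ▷ X) ≫ F = (λ_ X).hom ∧
  ((MonObj.mul (X := T.X)) ▷ X) ≫ F = (α_ T.X T.X X).hom ≫ (T.X ◁ F) ≫ F

/-- The shift morphism on the path object `[T, Ω]`: the curried form of
`T ⊗ T ⊗ [T,Ω] → T ⊗ [T,Ω] → Ω`, i.e. `(μ ⊗ [T,Ω])` followed by evaluation. -/
noncomputable def shift (T : Mon C) (Ω : C) :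
    T.X ⊗ (ihom T.X).obj Ω ⟶ (ihom T.X).obj Ω :=
  MonoidalClosed.curry ((α_ T.X T.X ((ihom T.X).obj Ω)).inv ≫
    ((MonObj.mul (X := T.X)) ▷ (ihom T.X).obj Ω) ≫ (ihom.ev T.X).app Ω)

/-- The transfer operator on `[X, Ω]` induced by `Φ : T ⊗ Ω ⟶ Ω`: the curried form of
`X ⊗ T ⊗ [X,Ω] → T ⊗ X ⊗ [X,Ω] → T ⊗ Ω → Ω` (swap, then evaluation, then `Φ`). -/
noncomputable def transfer (T : Mon C) {Ω : C} (Φ : T.X ⊗ Ω ⟶ Ω) (X : C) :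
    T.X ⊗ (ihom X).obj Ω ⟶ (ihom X).obj Ω :=
  MonoidalClosed.curry ((α_ X T.X ((ihom X).obj Ω)).inv ≫
    ((β_ X T.X).hom ▷ (ihom X).obj Ω) ≫ (α_ T.X X ((ihom X).obj Ω)).hom ≫
    (T.X ◁ (ihom.ev X).app Ω) ≫ Φ)

/-! Uncurried twice, `σ♭ ∘ Φ♭` is the map `(a, b, ω) ↦ (a b) • ω` and `U_Φ♭ ∘ Φ♭` is
`(a, b, ω) ↦ b • (a • ω)`. The associativity law of `Φ` rewrites the latter as `(b a) • ω`, and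
commutativity of `T` gives `b a = a b`. -/

theorem IsLeftAction.braiding_whiskerRight_comp_act {C : Type u} [Category.{v} C]
    [MonoidalCategory C] [SymmetricCategory C] (T : Mon C) [IsCommMonObj T.X] {X : C}
    {F : T.X ⊗ X ⟶ X} (hF : IsLeftAction T F) :
    (β_ T.X T.X).hom ▷ X ≫ (α_ T.X T.X X).hom ≫ T.X ◁ F ≫ F = MonObj.mul ▷ X ≫ F := by
  rw [← hF.2, ← comp_whiskerRight_assoc, IsCommMonObj.mul_comm]

theorem whiskerLeft_curry_comp_shift {C : Type u} [Category.{v} C] [MonoidalCategory C]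
    [MonoidalClosed C] (T : Mon C) {Y Ω : C} (F : T.X ⊗ Y ⟶ Ω) :
    T.X ◁ curry F ≫ shift T Ω = curry ((α_ T.X T.X Y).inv ≫ MonObj.mul ▷ Y ≫ F) := by
  rw [shift, ← curry_natural_left, associator_inv_naturality_right_assoc,
    whisker_exchange_assoc, ← uncurry_eq, uncurry_curry]

theorem whiskerLeft_curry_comp_transfer (T : Mon C) {X Y Ω : C} (Φ : T.X ⊗ Ω ⟶ Ω)
    (F : X ⊗ Y ⟶ Ω) :
    T.X ◁ curry F ≫ transfer T Φ X =
      curry ((α_ X T.X Y).inv ≫ (β_ X T.X).hom ▷ Y ≫ (α_ T.X X Y).hom ≫ T.X ◁ F ≫ Φ) := by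
  rw [transfer, ← curry_natural_left, associator_inv_naturality_right_assoc,
    whisker_exchange_assoc, associator_naturality_right_assoc, ← whiskerLeft_comp_assoc,
    ← uncurry_eq, uncurry_curry]

theorem flat_equalizes_shift_transfer (T : Mon C) (Ω : C)
    (hcomm : (β_ T.X T.X).hom ≫ (MonObj.mul (X := T.X)) = (MonObj.mul (X := T.X)))
    (Φ : T.X ⊗ Ω ⟶ Ω) (hΦ : IsLeftAction T Φ) :
    MonoidalClosed.curry Φ ≫ MonoidalClosed.curry (shift T Ω) =
      MonoidalClosed.curry Φ ≫ MonoidalClosed.curry (transfer T Φ T.X) := by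
  have : IsCommMonObj T.X := ⟨hcomm⟩
  rw [← curry_natural_left, ← curry_natural_left, whiskerLeft_curry_comp_shift,
    whiskerLeft_curry_comp_transfer, hΦ.braiding_whiskerRight_comp_act]
end

section
/- Let C be a symmetric monoidal closed category, T a commutative monoid object, and Φ : T ⊗ Ω → Ω a left action with flat adjoint Φ♭ : Ω → [T, Ω]. Then Φ♭ is an equalizer of σ♭, U_Φ♭ : [T, Ω] ⇉ [T, [T, Ω]]: for every morphism a : A → [T,Ω] with σ♭ ∘ a = U_Φ♭ ∘ a, there exists a unique b : A → Ω with Φ♭ ∘ b = a. Consequently, the subshift domain E_Φ (the equalizer object of σ♭ and U_Φ♭) is isomorphic to Ω. -/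
open CategoryTheory MonoidalCategory MonoidalClosed Limits

universe v u

variable {C : Type u} [Category.{v} C] [MonoidalCategory C] [SymmetricCategory C]
  [MonoidalClosed C]

/-
Evaluation at the unit `η` is a retraction `ε : [T, Ω] ⟶ Ω` of `Φ♭` (unit law of `Φ`), so a
factorization `b ≫ Φ♭ = a` can only be `b = a ≫ ε`. Uncurried, the equalizing condition on `a`
reads `a(s·t) = Φ(t, a(s))`; at `s = η` this is `a(t) = Φ(t, a(η))`, i.e. `a = (a ≫ ε) ≫ Φ♭`.
Finally `Φ♭` itself equalizes the pair by associativity of `Φ` and commutativity of `μ`, so it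
is an equalizer, and every other equalizer object is isomorphic to `Ω`.
-/

section

variable {D : Type*} [Category D] [MonoidalCategory D]

section Closed

variable [MonoidalClosed D]

noncomputable def evalAtOne (T : Mon D) (Ω : D) : (ihom T.X).obj Ω ⟶ Ω :=
  (λ_ _).inv ≫ (MonObj.one (X := T.X) ▷ _) ≫ (ihom.ev T.X).app Ω

lemma comp_evalAtOne {T : Mon D} {Ω A : D} (a : A ⟶ (ihom T.X).obj Ω) :
    a ≫ evalAtOne T Ω = (λ_ A).inv ≫ (MonObj.one (X := T.X) ▷ A) ≫ uncurry a := by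
  rw [evalAtOne, uncurry_eq, leftUnitor_inv_naturality_assoc, whisker_exchange_assoc]

lemma curry_comp_evalAtOne {T : Mon D} {Ω : D} {Φ : T.X ⊗ Ω ⟶ Ω}
    (hΦ : (MonObj.one (X := T.X) ▷ Ω) ≫ Φ = (λ_ Ω).hom) :
    curry Φ ≫ evalAtOne T Ω = 𝟙 Ω := by
  rw [comp_evalAtOne, uncurry_curry, hΦ, Iso.inv_hom_id]

end Closed

lemma whiskerLeft_comp_eq_of_mul_whiskerRight_comp_eq [BraidedCategory D] {T : Mon D}
    {Ω A : D} {Φ : T.X ⊗ Ω ⟶ Ω} {g : T.X ⊗ A ⟶ Ω}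
    (h : (MonObj.mul (X := T.X) ▷ A) ≫ g =
      ((β_ T.X T.X).hom ▷ A) ≫ (α_ T.X T.X A).hom ≫ (T.X ◁ g) ≫ Φ) :
    (T.X ◁ ((λ_ A).inv ≫ (MonObj.one (X := T.X) ▷ A) ≫ g)) ≫ Φ = g := by
  have one_braiding : (λ_ T.X).inv ≫ (MonObj.one (X := T.X) ▷ T.X) ≫ (β_ T.X T.X).hom =
      (ρ_ T.X).inv ≫ (T.X ◁ MonObj.one (X := T.X)) := by
    rw [BraidedCategory.braiding_naturality_left, leftUnitor_inv_braiding_assoc]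
  symm
  calc g = (((λ_ T.X).inv ≫ (MonObj.one (X := T.X) ▷ T.X) ≫ MonObj.mul) ▷ A) ≫ g := by
        rw [MonObj.one_mul, Iso.inv_hom_id, id_whiskerRight, Category.id_comp]
    _ = (((λ_ T.X).inv ≫ (MonObj.one (X := T.X) ▷ T.X) ≫ (β_ T.X T.X).hom) ▷ A) ≫
          (α_ T.X T.X A).hom ≫ (T.X ◁ g) ≫ Φ := by
        simp only [comp_whiskerRight, Category.assoc, h]
    _ = (T.X ◁ ((λ_ A).inv ≫ (MonObj.one (X := T.X) ▷ A) ≫ g)) ≫ Φ := by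
        rw [one_braiding]
        simp

end

lemma comp_curry_shift_eq_comp_curry_transfer_iff (T : Mon C) {Ω A : C} (Φ : T.X ⊗ Ω ⟶ Ω)
    (a : A ⟶ (ihom T.X).obj Ω) :
    a ≫ curry (shift T Ω) = a ≫ curry (transfer T Φ T.X) ↔
      (MonObj.mul (X := T.X) ▷ A) ≫ uncurry a =
        ((β_ T.X T.X).hom ▷ A) ≫ (α_ T.X T.X A).hom ≫ (T.X ◁ uncurry a) ≫ Φ := by
  rw [← curry_natural_left, ← curry_natural_left, curry_injective.eq_iff, shift, transfer,
    ← curry_natural_left, ← curry_natural_left, curry_injective.eq_iff,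
    associator_inv_naturality_right_assoc, whisker_exchange_assoc, ← uncurry_eq,
    associator_inv_naturality_right_assoc, whisker_exchange_assoc,
    associator_naturality_right_assoc, ← whiskerLeft_comp_assoc, ← uncurry_eq]
  exact cancel_epi (α_ T.X T.X A).inv

lemma comp_evalAtOne_comp_curry {T : Mon C} {Ω A : C} {Φ : T.X ⊗ Ω ⟶ Ω}
    {a : A ⟶ (ihom T.X).obj Ω} (h : a ≫ curry (shift T Ω) = a ≫ curry (transfer T Φ T.X)) :
    (a ≫ evalAtOne T Ω) ≫ curry Φ = a := by
  apply uncurry_injective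
  rw [uncurry_natural_left, uncurry_curry, comp_evalAtOne]
  exact whiskerLeft_comp_eq_of_mul_whiskerRight_comp_eq
    ((comp_curry_shift_eq_comp_curry_transfer_iff T Φ a).mp h)

lemma curry_comp_curry_shift_eq_comp_curry_transfer {T : Mon C} {Ω : C} {Φ : T.X ⊗ Ω ⟶ Ω}
    (hcomm : (β_ T.X T.X).hom ≫ MonObj.mul (X := T.X) = MonObj.mul (X := T.X))
    (hassoc : (MonObj.mul (X := T.X) ▷ Ω) ≫ Φ = (α_ T.X T.X Ω).hom ≫ (T.X ◁ Φ) ≫ Φ) :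
    curry Φ ≫ curry (shift T Ω) = curry Φ ≫ curry (transfer T Φ T.X) := by
  rw [comp_curry_shift_eq_comp_curry_transfer_iff, uncurry_curry, ← hassoc,
    ← comp_whiskerRight_assoc, hcomm]

noncomputable def isLimitForkCurry {T : Mon C} {Ω : C} {Φ : T.X ⊗ Ω ⟶ Ω}
    (hcomm : (β_ T.X T.X).hom ≫ MonObj.mul (X := T.X) = MonObj.mul (X := T.X))
    (hΦ : IsLeftAction T Φ) :
    IsLimit (Fork.ofι (curry Φ) (curry_comp_curry_shift_eq_comp_curry_transfer hcomm hΦ.2)) :=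
  Fork.IsLimit.mk _ (fun s => s.ι ≫ evalAtOne T Ω)
    (fun s => comp_evalAtOne_comp_curry s.condition)
    (fun s m hm => by simp [← hm, curry_comp_evalAtOne hΦ.1])

theorem flat_is_equalizer_of_shift_transfer (T : Mon C) (Ω : C)
    (hcomm : (β_ T.X T.X).hom ≫ (MonObj.mul (X := T.X)) = (MonObj.mul (X := T.X)))
    (Φ : T.X ⊗ Ω ⟶ Ω) (hΦ : IsLeftAction T Φ) :
    (∀ (A : C) (a : A ⟶ (ihom T.X).obj Ω),
        a ≫ MonoidalClosed.curry (shift T Ω) =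
          a ≫ MonoidalClosed.curry (transfer T Φ T.X) →
        ∃! b : A ⟶ Ω, b ≫ MonoidalClosed.curry Φ = a) ∧
    (∀ (E : C) (q : E ⟶ (ihom T.X).obj Ω)
        (w : q ≫ MonoidalClosed.curry (shift T Ω) =
          q ≫ MonoidalClosed.curry (transfer T Φ T.X)),
        IsLimit (Fork.ofι q w) → Nonempty (E ≅ Ω)) := by
  have hlim := isLimitForkCurry hcomm hΦ
  exact ⟨fun A a ha => Fork.IsLimit.existsUnique hlim a ha,
    fun E q w hq => ⟨hq.conePointUniqueUpToIso hlim⟩⟩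
end
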